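/- arXiv:2312.04601 — 2 statements merged into one kernel-verified Lean document; each statement's English description precedes it below -/
import Mathlib

section
/- Fréchet bound gap via conditional entropy: with Π the set of couplings matching the marginals P_{X,Z} and P_{Y,Z}, we have U − L ≤ sqrt(8‖g‖_∞² · min(H(X|Z), H(Y|Z))), where L = inf_{π∈Π} E_π[g], U = sup_{π∈Π} E_π[g], and H denotes conditional Shannon entropy under P. -/
/-!
Fix `z` and write `w = P(Z = z)`, `p = P(X = ·, Z = z)`, `q = P(Y = ·, Z = z)`. Every coupling
`γ` of `p` and `q` is close to the product coupling `p q / w`: by Pinsker's inequality its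
`ℓ¹`-distance is at most `√(2 w D)`, where `D = ∑ γ log (γ w / (p q))` is the conditional mutual
information, and `D` is at most the conditional entropies `∑ p log (w / p)` and `∑ q log (w / q)`
because `γ ≤ q` and `γ ≤ p`. Hence two couplings differ in expectation of `g` by at most
`2 C √(2 w D)` on the fibre of `z`, and Cauchy–Schwarz over `z` (with `∑ w = 1`) sums these bounds
to `√(8 C² min (H(X|Z), H(Y|Z)))`.
-/

open Finset Set InformationTheory

lemma three_mul_sq_sub_one_le_klFun {t : ℝ} (ht : 0 ≤ t) :
    3 * (t - 1) ^ 2 ≤ 2 * (t + 2) * klFun t := by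
  set h : ℝ → ℝ := fun s ↦ 2 * (s + 2) * klFun s - 3 * (s - 1) ^ 2
  set h' : ℝ → ℝ := fun s ↦ 2 * klFun s + 2 * (s + 2) * Real.log s - 6 * (s - 1)
  have hasDerivAt_h : ∀ s, 0 < s → HasDerivAt h (h' s) s := by
    intro s hs
    refine ((((hasDerivAt_id' s).add_const 2).const_mul 2).mul (hasDerivAt_klFun hs.ne')).sub
      ((((hasDerivAt_id' s).sub_const 1).pow 2).const_mul 3) |>.congr_deriv ?_
    simp only [h', klFun]
    ring
  have hasDerivAt_h' : ∀ s, 0 < s → HasDerivAt h' (4 * (Real.log s + s⁻¹ - 1)) s := by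
    intro s hs
    refine (((hasDerivAt_klFun hs.ne').const_mul 2).add
      ((((hasDerivAt_id' s).add_const 2).const_mul 2).mul (Real.hasDerivAt_log hs.ne'))).sub
      (((hasDerivAt_id' s).sub_const 1).const_mul 6) |>.congr_deriv ?_
    field_simp
    ring
  have hconvex : ConvexOn ℝ (Ici 0) h := by
    refine convexOn_of_hasDerivWithinAt2_nonneg (f' := h')
      (f'' := fun s ↦ 4 * (Real.log s + s⁻¹ - 1)) (convex_Ici 0) (by unfold h; fun_prop)
      (fun s hs ↦ ?_) (fun s hs ↦ ?_) (fun s hs ↦ ?_)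
    all_goals rw [interior_Ici] at hs
    · exact (hasDerivAt_h s hs).hasDerivWithinAt
    · exact (hasDerivAt_h' s hs).hasDerivWithinAt
    · linarith [Real.one_sub_inv_le_log_of_pos hs]
  have hmin : IsMinOn h (Ici 0) 1 := by
    refine hconvex.isMinOn_of_rightDeriv_eq_zero (by simp) ?_
    rw [(hasDerivAt_h 1 one_pos).hasDerivWithinAt.derivWithin (uniqueDiffWithinAt_Ioi 1)]
    simp [h', klFun_one]
  have : h 1 ≤ h t := hmin ht
  simp only [h, klFun_one] at this
  linarith

lemma three_mul_sq_sub_le_mul_mul_log {a b : ℝ} (ha : 0 ≤ a) (hb : 0 < b) :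
    3 * (a - b) ^ 2 ≤ 2 * (a + 2 * b) * (a * Real.log (a / b) - a + b) := by
  calc 3 * (a - b) ^ 2 = b ^ 2 * (3 * (a / b - 1) ^ 2) := by field_simp
    _ ≤ b ^ 2 * (2 * (a / b + 2) * klFun (a / b)) :=
        mul_le_mul_of_nonneg_left (three_mul_sq_sub_one_le_klFun (div_nonneg ha hb.le))
          (sq_nonneg b)
    _ = 2 * (a + 2 * b) * (a * Real.log (a / b) - a + b) := by
        rw [klFun]
        field_simp
        ring

/-- Pinsker's inequality for finite nonnegative measures of equal mass; the proof is
Cauchy–Schwarz against the weights `2 (μ + 2 ν) / 3`. -/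
theorem sq_sum_abs_sub_le_mul_sum_mul_log {ι : Type*} [Fintype ι] {μ ν : ι → ℝ}
    (hμ : ∀ i, 0 ≤ μ i) (hν : ∀ i, 0 ≤ ν i) (hμν : ∀ i, ν i = 0 → μ i = 0)
    (hsum : ∑ i, μ i = ∑ i, ν i) :
    (∑ i, |μ i - ν i|) ^ 2 ≤ 2 * (∑ i, ν i) * ∑ i, μ i * Real.log (μ i / ν i) := by
  set f : ι → ℝ := fun i ↦ μ i * Real.log (μ i / ν i) - μ i + ν i
  have hpoint : ∀ i, 3 * (μ i - ν i) ^ 2 ≤ 2 * (μ i + 2 * ν i) * f i := by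
    intro i
    rcases (hν i).eq_or_lt with h | h
    · simp [f, ← h, hμν i h.symm]
    · exact three_mul_sq_sub_le_mul_mul_log (hμ i) h
  have hf : ∀ i, 0 ≤ f i := by
    intro i
    rcases (hν i).eq_or_lt with h | h
    · simp [f, ← h, hμν i h.symm]
    · nlinarith [hpoint i, hμ i, sq_nonneg (μ i - ν i)]
  calc (∑ i, |μ i - ν i|) ^ 2 ≤ (∑ i, f i) * ∑ i, 2 * (μ i + 2 * ν i) / 3 :=
        sum_sq_le_sum_mul_sum_of_sq_le_mul _ (fun i _ ↦ hf i)
          (fun i _ ↦ by have := hμ i; have := hν i; positivity)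
          (fun i _ ↦ by rw [sq_abs]; linarith [hpoint i])
    _ = 2 * (∑ i, ν i) * ∑ i, μ i * Real.log (μ i / ν i) := by
        simp only [f, sum_add_distrib, sum_sub_distrib, ← sum_div, ← mul_sum, hsum]
        ring

lemma sum_mul_log_div_nonneg {α : Type*} [Fintype α] {p : α → ℝ} {w : ℝ}
    (hp : ∀ a, 0 ≤ p a) (hpw : ∑ a, p a = w) : 0 ≤ ∑ a, p a * Real.log (w / p a) := by
  refine sum_nonneg fun a _ ↦ ?_
  rcases (hp a).eq_or_lt with h | h
  · simp [← h]
  · refine mul_nonneg h.le (Real.log_nonneg ?_)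
    rw [one_le_div h, ← hpw]
    exact single_le_sum (fun b _ ↦ hp b) (mem_univ a)

lemma sum_mul_sub_sum_mul_le {ι : Type*} [Fintype ι] {g a b c : ι → ℝ} {C : ℝ}
    (hg : ∀ i, |g i| ≤ C) :
    ∑ i, g i * a i - ∑ i, g i * b i ≤ C * (∑ i, |a i - c i| + ∑ i, |b i - c i|) := by
  rw [← sum_sub_distrib, ← sum_add_distrib, mul_sum]
  refine sum_le_sum fun i _ ↦ ?_
  calc g i * a i - g i * b i ≤ |g i| * |a i - b i| := by
        rw [← mul_sub, ← abs_mul]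
        exact le_abs_self _
    _ ≤ C * (|a i - c i| + |b i - c i|) := by
        gcongr
        · exact (abs_nonneg _).trans (hg i)
        · exact hg i
        · exact (abs_sub_le _ (c i) _).trans_eq (by rw [abs_sub_comm (c i)])

lemma sum_sqrt_mul_min_le_sqrt_min {ι : Type*} [Fintype ι] {w A B : ι → ℝ} {K : ℝ}
    (hK : 0 ≤ K) (hw : ∀ i, 0 ≤ w i) (hw₁ : ∑ i, w i = 1) (hA : ∀ i, 0 ≤ A i)
    (hB : ∀ i, 0 ≤ B i) :
    ∑ i, √(K * w i * min (A i) (B i)) ≤ √(K * min (∑ i, A i) (∑ i, B i)) := by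
  calc ∑ i, √(K * w i * min (A i) (B i)) = ∑ i, √(w i) * √(K * min (A i) (B i)) := by
        refine sum_congr rfl fun i _ ↦ ?_
        rw [← Real.sqrt_mul (hw i)]
        ring_nf
    _ ≤ √(∑ i, w i) * √(∑ i, K * min (A i) (B i)) :=
        Real.sum_sqrt_mul_sqrt_le _ hw fun i ↦ mul_nonneg hK (le_min (hA i) (hB i))
    _ ≤ √(K * min (∑ i, A i) (∑ i, B i)) := by
        rw [hw₁, Real.sqrt_one, one_mul, ← mul_sum]
        gcongr
        exact le_min (sum_le_sum fun i _ ↦ min_le_left _ _)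
          (sum_le_sum fun i _ ↦ min_le_right _ _)

lemma sSup_sub_sInf_le_of_forall_sub_le {S : Set ℝ} {D : ℝ} (hS : S.Nonempty)
    (h : ∀ a ∈ S, ∀ b ∈ S, a - b ≤ D) : sSup S - sInf S ≤ D := by
  have : sSup S ≤ sInf S + D := csSup_le hS fun a ha ↦ by
    have : a - D ≤ sInf S := le_csInf hS fun b hb ↦ by linarith [h a ha b hb]
    linarith
  linarith

section Coupling

variable {𝒳 𝒴 : Type*} [Fintype 𝒳] [Fintype 𝒴] {γ : 𝒳 → 𝒴 → ℝ} {p : 𝒳 → ℝ} {q : 𝒴 → ℝ}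
  {w : ℝ}

lemma sum_sum_mul_log_div_le_of_le (hw : 0 < w) (hγ : ∀ x y, 0 ≤ γ x y)
    (hrow : ∀ x, ∑ y, γ x y = p x) (hγq : ∀ x y, γ x y ≤ q y) :
    ∑ x, ∑ y, γ x y * Real.log (γ x y / (p x * q y / w)) ≤ ∑ x, p x * Real.log (w / p x) := by
  calc ∑ x, ∑ y, γ x y * Real.log (γ x y / (p x * q y / w))
      ≤ ∑ x, ∑ y, γ x y * Real.log (w / p x) := by
        refine sum_le_sum fun x _ ↦ sum_le_sum fun y _ ↦ ?_
        rcases (hγ x y).eq_or_lt with h | h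
        · simp [← h]
        have hp : 0 < p x := h.trans_le (hrow x ▸ single_le_sum (fun y _ ↦ hγ x y) (mem_univ y))
        have hq : 0 < q y := h.trans_le (hγq x y)
        refine mul_le_mul_of_nonneg_left (Real.log_le_log (by positivity) ?_) h.le
        calc γ x y / (p x * q y / w) ≤ q y / (p x * q y / w) := by gcongr; exact hγq x y
          _ = w / p x := by field_simp
    _ = ∑ x, p x * Real.log (w / p x) := by simp only [← sum_mul, hrow]

lemma sum_sum_abs_sub_mul_div_le_sqrt (hw : 0 < w) (hγ : ∀ x y, 0 ≤ γ x y)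
    (hrow : ∀ x, ∑ y, γ x y = p x) (hcol : ∀ y, ∑ x, γ x y = q y) (hpw : ∑ x, p x = w) :
    ∑ x, ∑ y, |γ x y - p x * q y / w|
      ≤ √(2 * w * min (∑ x, p x * Real.log (w / p x)) (∑ y, q y * Real.log (w / q y))) := by
  have hp : ∀ x, 0 ≤ p x := fun x ↦ hrow x ▸ sum_nonneg fun y _ ↦ hγ x y
  have hq : ∀ y, 0 ≤ q y := fun y ↦ hcol y ▸ sum_nonneg fun x _ ↦ hγ x y
  have hγp : ∀ x y, γ x y ≤ p x := fun x y ↦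
    hrow x ▸ single_le_sum (fun y _ ↦ hγ x y) (mem_univ y)
  have hγq : ∀ x y, γ x y ≤ q y := fun x y ↦
    hcol y ▸ single_le_sum (fun x _ ↦ hγ x y) (mem_univ x)
  have hqw : ∑ y, q y = w := by simp only [← hcol, ← hpw, ← hrow]; exact sum_comm
  have hmass : ∑ x, ∑ y, p x * q y / w = w := by
    simp only [← sum_div, ← mul_sum, ← sum_mul, hqw, hpw]
    field_simp
  have hpinsker := sq_sum_abs_sub_le_mul_sum_mul_log (ι := 𝒳 × 𝒴) (μ := fun i ↦ γ i.1 i.2)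
    (ν := fun i ↦ p i.1 * q i.2 / w) (fun i ↦ hγ i.1 i.2)
    (fun i ↦ by have := hp i.1; have := hq i.2; positivity)
    (fun i h ↦ by
      obtain h | h := mul_eq_zero.1 ((div_eq_zero_iff.1 h).resolve_right hw.ne')
      · exact (h ▸ hγp i.1 i.2).antisymm (hγ i.1 i.2)
      · exact (h ▸ hγq i.1 i.2).antisymm (hγ i.1 i.2))
    (by simp only [Fintype.sum_prod_type, hrow, hpw, hmass])
  simp only [Fintype.sum_prod_type, hmass] at hpinsker
  have hX := sum_sum_mul_log_div_le_of_le hw hγ hrow hγq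
  have hY := sum_sum_mul_log_div_le_of_le (γ := fun y x ↦ γ x y) hw (fun y x ↦ hγ x y) hcol
    fun y x ↦ hγp x y
  simp only [mul_comm (q _) (p _)] at hY
  rw [sum_comm] at hY
  refine Real.le_sqrt_of_sq_le (hpinsker.trans ?_)
  gcongr
  exact le_min hX hY

lemma sum_sum_mul_sub_sum_sum_mul_le {γ₁ γ₂ : 𝒳 → 𝒴 → ℝ} {g : 𝒳 → 𝒴 → ℝ} {C : ℝ}
    (hw : 0 < w) (hpw : ∑ x, p x = w)
    (hγ₁ : ∀ x y, 0 ≤ γ₁ x y) (hrow₁ : ∀ x, ∑ y, γ₁ x y = p x) (hcol₁ : ∀ y, ∑ x, γ₁ x y = q y)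
    (hγ₂ : ∀ x y, 0 ≤ γ₂ x y) (hrow₂ : ∀ x, ∑ y, γ₂ x y = p x) (hcol₂ : ∀ y, ∑ x, γ₂ x y = q y)
    (hC : 0 ≤ C) (hg : ∀ x y, |g x y| ≤ C) :
    ∑ x, ∑ y, g x y * γ₁ x y - ∑ x, ∑ y, g x y * γ₂ x y
      ≤ √(8 * C ^ 2 * w *
          min (∑ x, p x * Real.log (w / p x)) (∑ y, q y * Real.log (w / q y))) := by
  set m := min (∑ x, p x * Real.log (w / p x)) (∑ y, q y * Real.log (w / q y))
  have h := sum_mul_sub_sum_mul_le (ι := 𝒳 × 𝒴) (g := fun i ↦ g i.1 i.2)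
    (a := fun i ↦ γ₁ i.1 i.2) (b := fun i ↦ γ₂ i.1 i.2) (c := fun i ↦ p i.1 * q i.2 / w)
    fun i ↦ hg i.1 i.2
  simp only [Fintype.sum_prod_type] at h
  calc _ ≤ C * (√(2 * w * m) + √(2 * w * m)) := by
        refine h.trans (mul_le_mul_of_nonneg_left (add_le_add ?_ ?_) hC)
        · exact sum_sum_abs_sub_mul_div_le_sqrt hw hγ₁ hrow₁ hcol₁ hpw
        · exact sum_sum_abs_sub_mul_div_le_sqrt hw hγ₂ hrow₂ hcol₂ hpw
    _ = √(8 * C ^ 2 * w * m) := by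
        rw [show 8 * C ^ 2 * w * m = (2 * C) ^ 2 * (2 * w * m) by ring,
          Real.sqrt_mul (sq_nonneg _), Real.sqrt_sq (by positivity)]
        ring

end Coupling

theorem stmt14 {𝒳 𝒴 𝒵 : Type*} [Fintype 𝒳] [Fintype 𝒴] [Fintype 𝒵]
    (P : 𝒳 → 𝒴 → 𝒵 → ℝ) (hP0 : ∀ x y z, 0 ≤ P x y z)
    (hP1 : ∑ x, ∑ y, ∑ z, P x y z = 1)
    (hpZ : ∀ z, 0 < ∑ x, ∑ y, P x y z)
    (g : 𝒳 → 𝒴 → 𝒵 → ℝ) (C : ℝ) (hg : ∀ x y z, |g x y z| ≤ C) :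
    sSup {r : ℝ | ∃ π : 𝒳 → 𝒴 → 𝒵 → ℝ, (∀ x y z, 0 ≤ π x y z) ∧
        (∀ x z, ∑ y, π x y z = ∑ y, P x y z) ∧
        (∀ y z, ∑ x, π x y z = ∑ x, P x y z) ∧
        r = ∑ x, ∑ y, ∑ z, g x y z * π x y z}
    - sInf {r : ℝ | ∃ π : 𝒳 → 𝒴 → 𝒵 → ℝ, (∀ x y z, 0 ≤ π x y z) ∧
        (∀ x z, ∑ y, π x y z = ∑ y, P x y z) ∧
        (∀ y z, ∑ x, π x y z = ∑ x, P x y z) ∧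
        r = ∑ x, ∑ y, ∑ z, g x y z * π x y z}
    ≤ Real.sqrt (8 * C^2 *
        min (∑ z, ∑ x, (∑ y, P x y z) *
              Real.log ((∑ x', ∑ y', P x' y' z) / (∑ y, P x y z)))
            (∑ z, ∑ y, (∑ x, P x y z) *
              Real.log ((∑ x', ∑ y', P x' y' z) / (∑ x, P x y z)))) := by
  have hC : 0 ≤ C := by
    obtain ⟨x, -, hx⟩ := exists_ne_zero_of_sum_ne_zero (hP1.trans_ne one_ne_zero)
    obtain ⟨y, -, hy⟩ := exists_ne_zero_of_sum_ne_zero hx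
    obtain ⟨z, -, -⟩ := exists_ne_zero_of_sum_ne_zero hy
    exact (abs_nonneg _).trans (hg x y z)
  have sum_comm₃ (f : 𝒳 → 𝒴 → 𝒵 → ℝ) : ∑ x, ∑ y, ∑ z, f x y z = ∑ z, ∑ x, ∑ y, f x y z := by
    simp only [sum_comm (γ := 𝒵)]
  refine sSup_sub_sInf_le_of_forall_sub_le ⟨_, P, hP0, fun _ _ ↦ rfl, fun _ _ ↦ rfl, rfl⟩ ?_
  rintro _ ⟨γ₁, hγ₁, hrow₁, hcol₁, rfl⟩ _ ⟨γ₂, hγ₂, hrow₂, hcol₂, rfl⟩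
  rw [sum_comm₃, sum_comm₃, ← sum_sub_distrib]
  refine (sum_le_sum fun z _ ↦ sum_sum_mul_sub_sum_sum_mul_le (hpZ z) rfl
    (hγ₁ · · z) (hrow₁ · z) (hcol₁ · z) (hγ₂ · · z) (hrow₂ · z) (hcol₂ · z) hC (hg · · z)).trans
    (sum_sqrt_mul_min_le_sqrt_min (by positivity) (fun z ↦ (hpZ z).le) (sum_comm₃ P ▸ hP1)
      (fun z ↦ sum_mul_log_div_nonneg (fun x ↦ sum_nonneg fun y _ ↦ hP0 x y z) rfl)
      (fun z ↦ sum_mul_log_div_nonneg (fun y ↦ sum_nonneg fun x _ ↦ hP0 x y z) sum_comm))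
end

section
/- Decomposition of the Fréchet lower bound over values of Z: inf_{π∈Π} E_π[g(X,Y,Z)] = ∑_z P(Z=z) · inf_{π_z ∈ Π_z} E_{π_z}[g(X,Y,z)], where Π_z is the set of couplings on 𝒳×𝒴 with marginals P_{X|Z=z} and P_{Y|Z=z}. -/
/-!
Write `p z = P(Z = z)`. A joint coupling `π` with marginals `P_{X,Z}` and `P_{Y,Z}` is the same
thing as a family, indexed by `z`, of couplings `π(·,·,z) / p z` of the conditional laws
`P_{X|Z=z}` and `P_{Y|Z=z}`, chosen independently of each other, and its cost is the `p`-weighted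
sum of their costs. The infimum of a nonnegatively weighted sum of independently chosen quantities
is the weighted sum of their infima.
-/

open Finset

section WeightedInf

variable {ι : Type*} [Fintype ι]

theorem csInf_setOf_sum_mul_eq (c : ι → ℝ) (hc : ∀ i, 0 ≤ c i) (S : ι → Set ℝ)
    (hne : ∀ i, (S i).Nonempty) (hbdd : ∀ i, BddBelow (S i)) :
    sInf {r | ∃ v : ι → ℝ, (∀ i, v i ∈ S i) ∧ r = ∑ i, c i * v i} = ∑ i, c i * sInf (S i) := by
  set T := {r | ∃ v : ι → ℝ, (∀ i, v i ∈ S i) ∧ r = ∑ i, c i * v i}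
  have hT : T.Nonempty := by
    choose v hv using hne
    exact ⟨_, v, hv, rfl⟩
  have hlower : ∀ r ∈ T, ∑ i, c i * sInf (S i) ≤ r := by
    rintro r ⟨v, hv, rfl⟩
    exact sum_le_sum fun i _ => mul_le_mul_of_nonneg_left (csInf_le (hbdd i) (hv i)) (hc i)
  refine le_antisymm (le_of_forall_pos_le_add fun ε hε => ?_) (le_csInf hT hlower)
  set C := ∑ i, c i
  have hC : 0 ≤ C := sum_nonneg fun i _ => hc i
  -- approximate every infimum to within `δ`, so that the weighted error is `δ * C ≤ ε`
  set δ := ε / (C + 1)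
  have hδ : 0 < δ := by positivity
  choose v hvS hvlt using fun i => Real.lt_sInf_add_pos (hne i) hδ
  calc sInf T ≤ ∑ i, c i * v i := csInf_le ⟨_, hlower⟩ ⟨v, hvS, rfl⟩
    _ ≤ ∑ i, c i * (sInf (S i) + δ) :=
        sum_le_sum fun i _ => mul_le_mul_of_nonneg_left (hvlt i).le (hc i)
    _ = ∑ i, c i * sInf (S i) + δ * C := by
        simp only [mul_add, sum_add_distrib, ← sum_mul, mul_comm δ, C]
    _ ≤ ∑ i, c i * sInf (S i) + ε := by
        gcongr
        calc δ * C ≤ δ * (C + 1) := by gcongr; linarith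
          _ = ε := div_mul_cancel₀ ε (by positivity)

end WeightedInf

section Coupling

variable {α β γ : Type*} [Fintype α] [Fintype β] [Fintype γ]

def couplingCosts (μ : α → ℝ) (ν : β → ℝ) (f : α → β → ℝ) : Set ℝ :=
  {r | ∃ q : α → β → ℝ, (∀ x y, 0 ≤ q x y) ∧ (∀ x, ∑ y, q x y = μ x) ∧
    (∀ y, ∑ x, q x y = ν y) ∧ r = ∑ x, ∑ y, f x y * q x y}

theorem couplingCosts_nonempty {μ : α → ℝ} {ν : β → ℝ} (hμ : ∀ x, 0 ≤ μ x) (hν : ∀ y, 0 ≤ ν y)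
    (hμ1 : ∑ x, μ x = 1) (hν1 : ∑ y, ν y = 1) (f : α → β → ℝ) :
    (couplingCosts μ ν f).Nonempty :=
  ⟨_, fun x y => μ x * ν y, fun x y => mul_nonneg (hμ x) (hν y),
    fun x => by rw [← mul_sum, hν1, mul_one], fun y => by rw [← sum_mul, hμ1, one_mul], rfl⟩

theorem couplingCosts_bddBelow (μ : α → ℝ) (ν : β → ℝ) (f : α → β → ℝ) :
    BddBelow (couplingCosts μ ν f) := by
  refine ⟨-∑ x, ∑ y, |f x y| * μ x, ?_⟩
  rintro r ⟨q, hq, hqμ, -, rfl⟩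
  simp only [← sum_neg_distrib]
  refine sum_le_sum fun x _ => sum_le_sum fun y _ => ?_
  have hqx : q x y ≤ μ x := by
    rw [← hqμ x]
    exact single_le_sum (fun y _ => hq x y) (mem_univ y)
  calc -(|f x y| * μ x) ≤ -|f x y| * q x y := by rw [neg_mul]; gcongr
    _ ≤ f x y * q x y := mul_le_mul_of_nonneg_right (neg_abs_le _) (hq x y)

theorem sum_sum_sum_comm_right (F : α → β → γ → ℝ) :
    ∑ x, ∑ y, ∑ z, F x y z = ∑ z, ∑ x, ∑ y, F x y z :=
  (sum_congr rfl fun _ _ => sum_comm).trans sum_comm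

theorem setOf_joint_coupling_cost_eq (p : γ → ℝ) (hp : ∀ z, 0 < p z) (μ : α → γ → ℝ)
    (ν : β → γ → ℝ) (f : α → β → γ → ℝ) :
    {r | ∃ π : α → β → γ → ℝ, (∀ x y z, 0 ≤ π x y z) ∧ (∀ x z, ∑ y, π x y z = μ x z) ∧
        (∀ y z, ∑ x, π x y z = ν y z) ∧ r = ∑ x, ∑ y, ∑ z, f x y z * π x y z} =
      {r | ∃ v : γ → ℝ, (∀ z, v z ∈ couplingCosts (fun x => μ x z / p z) (fun y => ν y z / p z)
          (fun x y => f x y z)) ∧ r = ∑ z, p z * v z} := by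
  ext r
  constructor
  · rintro ⟨π, hπ, hπμ, hπν, rfl⟩
    refine ⟨fun z => ∑ x, ∑ y, f x y z * (π x y z / p z), fun z => ?_, ?_⟩
    · refine ⟨fun x y => π x y z / p z, fun x y => div_nonneg (hπ x y z) (hp z).le,
        fun x => ?_, fun y => ?_, rfl⟩
      · rw [← sum_div, hπμ]
      · rw [← sum_div, hπν]
    · rw [sum_sum_sum_comm_right]
      refine sum_congr rfl fun z _ => ?_
      simp only [mul_sum]
      refine sum_congr rfl fun x _ => sum_congr rfl fun y _ => ?_
      field_simp [(hp z).ne']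
  · rintro ⟨v, hv, rfl⟩
    choose q hq hqμ hqν hvq using hv
    refine ⟨fun x y z => p z * q z x y, fun x y z => mul_nonneg (hp z).le (hq z x y),
      fun x z => ?_, fun y z => ?_, ?_⟩
    · rw [← mul_sum, hqμ, mul_div_cancel₀ _ (hp z).ne']
    · rw [← mul_sum, hqν, mul_div_cancel₀ _ (hp z).ne']
    · rw [sum_sum_sum_comm_right]
      refine sum_congr rfl fun z _ => ?_
      simp only [hvq, mul_sum]
      exact sum_congr rfl fun x _ => sum_congr rfl fun y _ => by ring

end Coupling

theorem stmt18_general {𝒳 𝒴 𝒵 : Type*} [Fintype 𝒳] [Fintype 𝒴] [Fintype 𝒵]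
    (P : 𝒳 → 𝒴 → 𝒵 → ℝ) (hP0 : ∀ x y z, 0 ≤ P x y z)
    (hpZ : ∀ z, 0 < ∑ x, ∑ y, P x y z)
    (g : 𝒳 → 𝒴 → 𝒵 → ℝ) :
    sInf {r : ℝ | ∃ π : 𝒳 → 𝒴 → 𝒵 → ℝ, (∀ x y z, 0 ≤ π x y z) ∧
        (∀ x z, ∑ y, π x y z = ∑ y, P x y z) ∧
        (∀ y z, ∑ x, π x y z = ∑ x, P x y z) ∧
        r = ∑ x, ∑ y, ∑ z, g x y z * π x y z}
    = ∑ z, (∑ x, ∑ y, P x y z) *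
        sInf {r : ℝ | ∃ q : 𝒳 → 𝒴 → ℝ, (∀ x y, 0 ≤ q x y) ∧
          (∀ x, ∑ y, q x y = (∑ y, P x y z) / (∑ x', ∑ y', P x' y' z)) ∧
          (∀ y, ∑ x, q x y = (∑ x, P x y z) / (∑ x', ∑ y', P x' y' z)) ∧
          r = ∑ x, ∑ y, g x y z * q x y} := by
  have hdecomp := setOf_joint_coupling_cost_eq (fun z => ∑ x, ∑ y, P x y z) hpZ
    (fun x z => ∑ y, P x y z) (fun y z => ∑ x, P x y z) g
  beta_reduce at hdecomp
  rw [hdecomp]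
  refine csInf_setOf_sum_mul_eq _ (fun z => (hpZ z).le) _ (fun z => ?_)
    (fun z => couplingCosts_bddBelow _ _ _)
  have hne := (hpZ z).ne'
  refine couplingCosts_nonempty (fun x => div_nonneg (sum_nonneg fun y _ => hP0 x y z) (hpZ z).le)
    (fun y => div_nonneg (sum_nonneg fun x _ => hP0 x y z) (hpZ z).le) ?_ ?_ _
  · rw [← sum_div, div_self hne]
  · rw [← sum_div, sum_comm, div_self hne]

theorem stmt18 {𝒳 𝒴 𝒵 : Type*} [Fintype 𝒳] [Fintype 𝒴] [Fintype 𝒵]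
    (P : 𝒳 → 𝒴 → 𝒵 → ℝ) (hP0 : ∀ x y z, 0 ≤ P x y z)
    (hP1 : ∑ x, ∑ y, ∑ z, P x y z = 1)
    (hpZ : ∀ z, 0 < ∑ x, ∑ y, P x y z)
    (g : 𝒳 → 𝒴 → 𝒵 → ℝ) :
    sInf {r : ℝ | ∃ π : 𝒳 → 𝒴 → 𝒵 → ℝ, (∀ x y z, 0 ≤ π x y z) ∧
        (∀ x z, ∑ y, π x y z = ∑ y, P x y z) ∧
        (∀ y z, ∑ x, π x y z = ∑ x, P x y z) ∧
        r = ∑ x, ∑ y, ∑ z, g x y z * π x y z}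
    = ∑ z, (∑ x, ∑ y, P x y z) *
        sInf {r : ℝ | ∃ q : 𝒳 → 𝒴 → ℝ, (∀ x y, 0 ≤ q x y) ∧
          (∀ x, ∑ y, q x y = (∑ y, P x y z) / (∑ x', ∑ y', P x' y' z)) ∧
          (∀ y, ∑ x, q x y = (∑ x, P x y z) / (∑ x', ∑ y', P x' y' z)) ∧
          r = ∑ x, ∑ y, g x y z * q x y} :=
  stmt18_general P hP0 hpZ g
end
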